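/- arXiv:1801.01709 — 5 statements merged into one kernel-verified Lean document; each statement's English description precedes it below -/
import Mathlib

section
/- For constants a, b > 0 and c > 0, the function g(t) = a·t·(2^{c/t} − 1) + b·t·(2^{c/t} − 1)² is convex on t ∈ (0, ∞). -/
/-!
Writing `2 ^ (c / t) = exp (d / t)` with `d = c log 2`, the function is `t ↦ t h(d / t)` for
`h x = a (eˣ - 1) + b (eˣ - 1)²`, the perspective of `h`. The function `h` is convex on `[0, ∞)`,
being a nonnegative combination of the convex nonnegative function `eˣ - 1` and its square, and the
perspective of a convex function is convex: for `s = p t₁ + q t₂` the point `d / s` is the convex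
combination of `d / t₁` and `d / t₂` with weights `p t₁ / s` and `q t₂ / s`.
-/

open Real Set

theorem ConvexOn.perspective {E : Type*} [AddCommGroup E] [Module ℝ E] {s : Set E} {f : E → ℝ}
    (hf : ConvexOn ℝ s f) {d : E} (hd : ∀ t : ℝ, 0 < t → t⁻¹ • d ∈ s) :
    ConvexOn ℝ (Ioi 0) (fun t => t * f (t⁻¹ • d)) := by
  refine ⟨convex_Ioi 0, fun t₁ (ht₁ : 0 < t₁) t₂ (ht₂ : 0 < t₂) p q hp hq hpq => ?_⟩
  simp only [smul_eq_mul]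
  set u := p * t₁ + q * t₂
  have hu : 0 < u := by
    rcases hp.eq_or_lt with rfl | hp'
    · simp only [zero_add] at hpq
      simpa [u, hpq] using ht₂
    · positivity
  have hw : p * t₁ / u + q * t₂ / u = 1 := by rw [← add_div, div_self hu.ne']
  have hpoint : (p * t₁ / u) • t₁⁻¹ • d + (q * t₂ / u) • t₂⁻¹ • d = u⁻¹ • d := by
    rw [smul_smul, smul_smul, ← add_smul]
    congr 1
    field_simp
    rw [hpq]
  have hcomb := hf.2 (hd t₁ ht₁) (hd t₂ ht₂) (by positivity) (by positivity) hw
  rw [hpoint, smul_eq_mul, smul_eq_mul] at hcomb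
  calc u * f (u⁻¹ • d)
      ≤ u * (p * t₁ / u * f (t₁⁻¹ • d) + q * t₂ / u * f (t₂⁻¹ • d)) := by gcongr
    _ = p * (t₁ * f (t₁⁻¹ • d)) + q * (t₂ * f (t₂⁻¹ • d)) := by field_simp

theorem convexOn_exp_sub_one_add_sq {a b : ℝ} (ha : 0 ≤ a) (hb : 0 ≤ b) :
    ConvexOn ℝ (Ici 0) (fun x => a * (exp x - 1) + b * (exp x - 1) ^ 2) := by
  have hconv : ConvexOn ℝ (Ici 0) (fun x => exp x - 1) :=
    (convexOn_exp.subset (subset_univ _) (convex_Ici 0)).sub (concaveOn_const 1 (convex_Ici 0))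
  have hnonneg : ∀ x ∈ Ici (0 : ℝ), 0 ≤ exp x - 1 := fun x hx => sub_nonneg.2 (one_le_exp hx)
  exact (hconv.smul ha).add ((hconv.pow hnonneg 2).smul hb)

theorem stmt_1 (a b c : ℝ) (ha : 0 < a) (hb : 0 < b) (hc : 0 < c) :
    ConvexOn ℝ (Set.Ioi (0 : ℝ))
      (fun t : ℝ => a * t * ((2 : ℝ) ^ (c / t) - 1) + b * t * ((2 : ℝ) ^ (c / t) - 1) ^ 2) := by
  have hd : ∀ t : ℝ, 0 < t → t⁻¹ • (c * log 2) ∈ Ici (0 : ℝ) := fun t ht =>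
    (smul_pos (inv_pos.2 ht) (mul_pos hc (log_pos one_lt_two))).le
  convert (convexOn_exp_sub_one_add_sq ha.le hb.le).perspective hd using 1
  funext t
  rw [rpow_def_of_pos two_pos, smul_eq_mul]
  ring_nf
end

section
/- Fix constants a > 0, b > 0, and c > 1. Define f(x) = x · (2^{1/x}·(1 + a·2^{1/x})) / (1 − b·2^{c/x}) on the domain D = { x > 0 : 1 − b·2^{c/x} > 0 }. Then f is convex on D. -/
/-!
Substituting `t = 1 / x` writes `f x = x * g (1 / x)` with `g t = u t * v t`, where
`u t = 2 ^ t * (1 + a * 2 ^ t)` and `v t = (1 - b * (2 ^ c) ^ t)⁻¹`. Both factors are convex,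
nonnegative and increasing (`v` as the reciprocal of a positive concave function), so their
product is convex, and `x ↦ x * g (1 / x)` is the perspective of `g`, which preserves convexity.
-/

open Real Set

lemma convexOn_inv_Ioi : ConvexOn ℝ (Ioi 0) fun x : ℝ ↦ x⁻¹ := by
  simpa only [zpow_neg_one] using convexOn_zpow (𝕜 := ℝ) (-1)

lemma ConcaveOn.convexOn_inv {E : Type*} [AddCommGroup E] [Module ℝ E] {s : Set E} {f : E → ℝ}
    (hf : ConcaveOn ℝ s f) (hf₀ : ∀ ⦃x⦄, x ∈ s → 0 < f x) : ConvexOn ℝ s fun x ↦ (f x)⁻¹ := by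
  refine ⟨hf.1, fun x hx y hy p q hp hq hpq ↦ ?_⟩
  have hcomb : 0 < p • f x + q • f y := convex_Ioi (0 : ℝ) (hf₀ hx) (hf₀ hy) hp hq hpq
  calc (f (p • x + q • y))⁻¹ ≤ (p • f x + q • f y)⁻¹ :=
        inv_anti₀ hcomb (hf.2 hx hy hp hq hpq)
    _ ≤ p • (f x)⁻¹ + q • (f y)⁻¹ :=
        convexOn_inv_Ioi.2 (hf₀ hx) (hf₀ hy) hp hq hpq

lemma ConvexOn.perspective_inv {s : Set ℝ} {g : ℝ → ℝ} (hg : ConvexOn ℝ s g) :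
    ConvexOn ℝ {x | 0 < x ∧ x⁻¹ ∈ s} fun x ↦ x * g x⁻¹ := by
  have weights : ∀ ⦃x y p q : ℝ⦄, 0 < x → 0 < y → 0 ≤ p → 0 ≤ q → p + q = 1 →
      let z := p * x + q * y
      0 < z ∧ 0 ≤ p * x / z ∧ 0 ≤ q * y / z ∧ p * x / z + q * y / z = 1 ∧
        (p * x / z) • x⁻¹ + (q * y / z) • y⁻¹ = z⁻¹ := by
    intro x y p q hx hy hp hq hpq z
    have hz : 0 < z := convex_Ioi (0 : ℝ) hx hy hp hq hpq
    refine ⟨hz, by positivity, by positivity, by rw [← add_div, div_self hz.ne'], ?_⟩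
    simp only [smul_eq_mul]
    field_simp
    exact hpq
  refine ⟨fun x hx y hy p q hp hq hpq ↦ ?_, fun x hx y hy p q hp hq hpq ↦ ?_⟩
  · obtain ⟨hz, hα, hβ, hαβ, hcomb⟩ := weights hx.1 hy.1 hp hq hpq
    exact ⟨hz, hcomb ▸ hg.1 hx.2 hy.2 hα hβ hαβ⟩
  · obtain ⟨hz, hα, hβ, hαβ, hcomb⟩ := weights hx.1 hy.1 hp hq hpq
    simp only [smul_eq_mul] at hcomb ⊢
    calc (p * x + q * y) * g (p * x + q * y)⁻¹
        ≤ (p * x + q * y) *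
            (p * x / (p * x + q * y) * g x⁻¹ + q * y / (p * x + q * y) * g y⁻¹) := by
          rw [← hcomb]
          gcongr
          exact hg.2 hx.2 hy.2 hα hβ hαβ
      _ = p * (x * g x⁻¹) + q * (y * g y⁻¹) := by
          field_simp

section RpowFactors

variable {a b r : ℝ}

lemma concaveOn_one_sub_mul_rpow (hb : 0 ≤ b) (hr : 0 < r) :
    ConcaveOn ℝ univ fun t : ℝ ↦ 1 - b * r ^ t :=
  (concaveOn_const 1 convex_univ).sub ((convexOn_rpow_left hr).smul hb)

lemma convexOn_inv_one_sub_mul_rpow (hb : 0 ≤ b) (hr : 0 < r) :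
    ConvexOn ℝ {t : ℝ | 0 < 1 - b * r ^ t} fun t ↦ (1 - b * r ^ t)⁻¹ := by
  have hconc := concaveOn_one_sub_mul_rpow hb hr
  have hS : Convex ℝ {t : ℝ | 0 < 1 - b * r ^ t} := by simpa using hconc.convex_gt 0
  exact (hconc.subset (subset_univ _) hS).convexOn_inv fun _ ht ↦ ht

lemma monotoneOn_inv_one_sub_mul_rpow (hb : 0 ≤ b) (hr : 1 ≤ r) :
    MonotoneOn (fun t : ℝ ↦ (1 - b * r ^ t)⁻¹) {t : ℝ | 0 < 1 - b * r ^ t} :=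
  fun _ _ _ hy hxy ↦ inv_anti₀ hy <|
    sub_le_sub_left (mul_le_mul_of_nonneg_left (rpow_le_rpow_of_exponent_le hr hxy) hb) 1

lemma monotone_rpow_mul_one_add_mul_rpow (ha : 0 ≤ a) (hr : 1 ≤ r) :
    Monotone fun t : ℝ ↦ r ^ t * (1 + a * r ^ t) :=
  have hmono := monotone_rpow_of_base_ge_one hr
  hmono.mul ((hmono.const_mul ha).const_add 1) (fun _ ↦ by positivity) (fun _ ↦ by positivity)

lemma convexOn_rpow_mul_one_add_mul_rpow (ha : 0 ≤ a) (hr : 1 ≤ r) :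
    ConvexOn ℝ univ fun t : ℝ ↦ r ^ t * (1 + a * r ^ t) := by
  have hmono := monotone_rpow_of_base_ge_one hr
  have hconv := convexOn_rpow_left (zero_lt_one.trans_le hr)
  exact hconv.mul ((convexOn_const 1 convex_univ).add (hconv.smul ha))
    (fun _ _ ↦ by positivity) (fun _ _ ↦ by positivity)
    ((hmono.monotoneOn _).monovaryOn (((hmono.const_mul ha).const_add 1).monotoneOn _))

end RpowFactors

theorem stmt_4 (a b c : ℝ) (ha : 0 < a) (hb : 0 < b) (hc : 1 < c) :
    ConvexOn ℝ {x : ℝ | 0 < x ∧ 0 < 1 - b * (2 : ℝ) ^ (c / x)}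
      (fun x : ℝ =>
        x * ((2 : ℝ) ^ (1 / x) * (1 + a * (2 : ℝ) ^ (1 / x))) / (1 - b * (2 : ℝ) ^ (c / x))) := by
  have hbase : 1 ≤ (2 : ℝ) ^ c := one_le_rpow one_le_two (by linarith)
  have hv := convexOn_inv_one_sub_mul_rpow hb.le (by positivity : 0 < (2 : ℝ) ^ c)
  have hu := (convexOn_rpow_mul_one_add_mul_rpow ha.le one_le_two).subset (subset_univ _) hv.1
  have hg := hu.mul hv (fun _ _ ↦ by positivity) (fun _ ht ↦ (inv_pos.2 ht).le)
    (((monotone_rpow_mul_one_add_mul_rpow ha.le one_le_two).monotoneOn _).monovaryOn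
      (monotoneOn_inv_one_sub_mul_rpow hb.le hbase))
  have hrpow_div : ∀ x : ℝ, (2 : ℝ) ^ (c / x) = ((2 : ℝ) ^ c) ^ x⁻¹ := fun x ↦ by
    rw [div_eq_mul_inv, rpow_mul zero_le_two]
  convert hg.perspective_inv using 1
  · ext x
    simp [hrpow_div]
  · funext x
    simp only [hrpow_div, one_div, Pi.mul_apply]
    ring
end

section
/- Fix constants a > 0, b > 0, and c > 1. Define f(x) = x · √( (2^{1/x}·(1 + a·2^{1/x})) / (1 − b·2^{c/x}) ) on D = { x > 0 : 1 − b·2^{c/x} > 0 }. Then f is convex on D. -/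
/-!
With `g u = √(2^u (1 + a 2^u) / (1 - b 2^(c u)))` the function is `x ↦ x g(1/x)`, the perspective
of `g`, so it suffices that `g` is convex. In fact `g` is log-convex: `2 log g` is the sum of the
linear term `u log 2`, of `log (1 + a e^v)` and of `-log (1 - b e^v)` at `v` linear in `u`, and both
of these are convex in `v` since their derivatives `1 - 1/(1 + a e^v)` and `1/(1 - b e^v) - 1`
increase with `v`.
-/

open Real Set

theorem ConvexOn.exp {s : Set ℝ} {f : ℝ → ℝ} (hf : ConvexOn ℝ s f) :
    ConvexOn ℝ s fun x => exp (f x) :=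
  ⟨hf.1, fun _ hx _ hy _ _ hp hq hpq =>
    (exp_le_exp.2 (hf.2 hx hy hp hq hpq)).trans
      (convexOn_exp.2 (mem_univ _) (mem_univ _) hp hq hpq)⟩

theorem ConvexOn.comp_const_mul {s : Set ℝ} {f : ℝ → ℝ} (hf : ConvexOn ℝ s f) (t : ℝ) :
    ConvexOn ℝ ((t * ·) ⁻¹' s) fun u => f (t * u) :=
  hf.comp_linearMap (LinearMap.mul ℝ ℝ t)

theorem convexOn_log_one_add_mul_exp {k : ℝ} (hk : 0 ≤ k) :
    ConvexOn ℝ univ fun v => log (1 + k * exp v) := by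
  have hpos (v : ℝ) : 0 < 1 + k * exp v := by positivity
  have hderiv (v : ℝ) : HasDerivAt (fun v => log (1 + k * exp v)) (1 - (1 + k * exp v)⁻¹) v := by
    convert (((hasDerivAt_exp v).const_mul k).const_add 1).log (hpos v).ne' using 1
    field_simp
    ring
  have hdiff : Differentiable ℝ fun v => log (1 + k * exp v) := fun v => (hderiv v).differentiableAt
  refine MonotoneOn.convexOn_of_deriv convex_univ hdiff.continuous.continuousOn
    hdiff.differentiableOn ?_
  intro u _ v _ huv
  rw [(hderiv u).deriv, (hderiv v).deriv]
  have : k * exp u ≤ k * exp v := by gcongr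
  have := inv_anti₀ (hpos u) (show 1 + k * exp u ≤ 1 + k * exp v by linarith)
  linarith

theorem convexOn_neg_log_one_sub_mul_exp {k : ℝ} (hk : 0 ≤ k) :
    ConvexOn ℝ {v | k * exp v < 1} fun v => -log (1 - k * exp v) := by
  have hopen : IsOpen {v : ℝ | k * exp v < 1} := isOpen_lt (by fun_prop) continuous_const
  have hconvex : Convex ℝ {v : ℝ | k * exp v < 1} := by
    simpa using (convexOn_exp.smul hk).convex_lt 1
  have hderiv (v : ℝ) (hv : k * exp v < 1) :
      HasDerivAt (fun v => -log (1 - k * exp v)) ((1 - k * exp v)⁻¹ - 1) v := by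
    have hpos : 0 < 1 - k * exp v := by linarith
    refine ((((hasDerivAt_exp v).const_mul k).const_sub 1).log hpos.ne').neg.congr_deriv ?_
    field_simp
    ring
  refine MonotoneOn.convexOn_of_deriv hconvex
    (fun v hv => (hderiv v hv).continuousAt.continuousWithinAt) ?_ ?_ <;> rw [hopen.interior_eq]
  · exact fun v hv => (hderiv v hv).differentiableAt.differentiableWithinAt
  intro u hu v hv huv
  rw [(hderiv u hu).deriv, (hderiv v hv).deriv]
  have : k * exp u ≤ k * exp v := by gcongr
  have := inv_anti₀ (sub_pos.2 hv) (sub_le_sub_left this 1)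
  linarith

theorem ConvexOn.perspective_s5 {s : Set ℝ} {g : ℝ → ℝ} (hg : ConvexOn ℝ s g) :
    ConvexOn ℝ {x | 0 < x ∧ x⁻¹ ∈ s} fun x => x * g x⁻¹ := by
  -- `(p x + q y)⁻¹` is a convex combination of `x⁻¹` and `y⁻¹`, with weights `p x, q y` rescaled.
  have reweigh : ∀ ⦃x⦄, 0 < x → ∀ ⦃y⦄, 0 < y → ∀ ⦃p q : ℝ⦄, 0 ≤ p → 0 ≤ q → p + q = 1 →
      0 < p * x + q * y ∧
      (p * x / (p * x + q * y)) • x⁻¹ + (q * y / (p * x + q * y)) • y⁻¹ = (p * x + q * y)⁻¹ ∧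
      0 ≤ p * x / (p * x + q * y) ∧ 0 ≤ q * y / (p * x + q * y) ∧
      p * x / (p * x + q * y) + q * y / (p * x + q * y) = 1 := by
    intro x hx y hy p q hp hq hpq
    have hz : 0 < p * x + q * y := convex_Ioi (0 : ℝ) hx hy hp hq hpq
    refine ⟨hz, ?_, by positivity, by positivity, by field_simp⟩
    simp only [smul_eq_mul]
    field_simp
    linarith
  refine ⟨fun x ⟨hx, hxs⟩ y ⟨hy, hys⟩ p q hp hq hpq => ?_, ?_⟩
  · obtain ⟨hz, hcomb, hp', hq', hpq'⟩ := reweigh hx hy hp hq hpq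
    exact ⟨hz, hcomb ▸ hg.1 hxs hys hp' hq' hpq'⟩
  · intro x ⟨hx, hxs⟩ y ⟨hy, hys⟩ p q hp hq hpq
    obtain ⟨hz, hcomb, hp', hq', hpq'⟩ := reweigh hx hy hp hq hpq
    have := hg.2 hxs hys hp' hq' hpq'
    rw [hcomb] at this
    simp only [smul_eq_mul] at this ⊢
    calc (p * x + q * y) * g (p * x + q * y)⁻¹
        ≤ (p * x + q * y) * (p * x / (p * x + q * y) * g x⁻¹ + q * y / (p * x + q * y) * g y⁻¹) :=
          mul_le_mul_of_nonneg_left this hz.le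
      _ = p * (x * g x⁻¹) + q * (y * g y⁻¹) := by field_simp

theorem convexOn_sqrt_rpow_mul_one_add_div_one_sub {B a b : ℝ} (hB : 0 < B) (ha : 0 ≤ a)
    (hb : 0 ≤ b) (c : ℝ) :
    ConvexOn ℝ {u | 0 < 1 - b * B ^ (c * u)}
      fun u => √(B ^ u * (1 + a * B ^ u) / (1 - b * B ^ (c * u))) := by
  have hrpow (t : ℝ) : B ^ t = exp (log B * t) := rpow_def_of_pos hB t
  have hdom : {u | 0 < 1 - b * B ^ (c * u)} = (log B * c * ·) ⁻¹' {v | b * exp v < 1} := by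
    ext u
    simp only [mem_ofPred_eq, mem_preimage, hrpow, sub_pos, mul_assoc]
  have hlog : ConvexOn ℝ {u | 0 < 1 - b * B ^ (c * u)} fun u =>
      log B * u + log (1 + a * exp (log B * u)) + -log (1 - b * exp (log B * c * u)) := by
    rw [hdom]
    have hconv := (convexOn_neg_log_one_sub_mul_exp hb).comp_const_mul (log B * c)
    have hlin := (LinearMap.mul ℝ ℝ (log B)).convexOn hconv.1
    have hmid := ((convexOn_log_one_add_mul_exp ha).comp_const_mul (log B)).subset
      (subset_univ _) hconv.1
    exact (hlin.add hmid).add hconv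
  refine (hlog.smul (by norm_num : (0 : ℝ) ≤ 1 / 2)).exp.congr fun u hu => ?_
  have hden : 0 < 1 - b * B ^ (c * u) := hu
  have hnum : 0 < B ^ u * (1 + a * B ^ u) := by positivity
  simp only [smul_eq_mul]
  rw [sqrt_eq_rpow, rpow_def_of_pos (div_pos hnum hden), log_div hnum.ne' hden.ne',
    log_mul (by positivity) (by positivity), hrpow u, hrpow (c * u), log_exp]
  ring_nf

theorem stmt_5_general (a b c : ℝ) (ha : 0 < a) (hb : 0 < b) :
    ConvexOn ℝ {x : ℝ | 0 < x ∧ 0 < 1 - b * (2 : ℝ) ^ (c / x)}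
      (fun x : ℝ =>
        x * Real.sqrt (((2 : ℝ) ^ (1 / x) * (1 + a * (2 : ℝ) ^ (1 / x))) /
          (1 - b * (2 : ℝ) ^ (c / x)))) := by
  convert (convexOn_sqrt_rpow_mul_one_add_div_one_sub two_pos ha.le hb.le c).perspective_s5 using 1
  · simp only [div_eq_mul_inv, mem_ofPred_eq]
  · simp only [div_eq_mul_inv, one_mul]

theorem stmt_5 (a b c : ℝ) (ha : 0 < a) (hb : 0 < b) (hc : 1 < c) :
    ConvexOn ℝ {x : ℝ | 0 < x ∧ 0 < 1 - b * (2 : ℝ) ^ (c / x)}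
      (fun x : ℝ =>
        x * Real.sqrt (((2 : ℝ) ^ (1 / x) * (1 + a * (2 : ℝ) ^ (1 / x))) /
          (1 - b * (2 : ℝ) ^ (c / x)))) :=
  stmt_5_general a b c ha hb
end

section
/- Let b > 0, x > 0, and 1 < c < 4√2 − 4. Then g(c) = 4 + 4^{c/x}·b²·(c − 2)² + 2^{c/x}·b·(c² + 4c − 8) > 0. -/
theorem stmt_9 (b x c : ℝ) (hb : 0 < b) (hx : 0 < x) (hc1 : 1 < c)
    (hc2 : c < 4 * Real.sqrt 2 - 4) :
    0 < 4 + (4 : ℝ) ^ (c / x) * b ^ 2 * (c - 2) ^ 2 +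
      (2 : ℝ) ^ (c / x) * b * (c ^ 2 + 4 * c - 8) := by
  have h4 : (4 : ℝ) ^ (c / x) = ((2 : ℝ) ^ (c / x)) ^ 2 := by
    rw [sq, ← Real.rpow_add (by norm_num : (0:ℝ) < 2),
      show c / x + c / x = (2 : ℝ) * (c / x) by ring,
      Real.rpow_mul (by norm_num : (0:ℝ) ≤ 2)]
    norm_num
  have ht : 0 < (2 : ℝ) ^ (c / x) := Real.rpow_pos_of_pos (by norm_num) _
  set t : ℝ := (2 : ℝ) ^ (c / x) * b with htdef
  have htpos : 0 < t := mul_pos ht hb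
  have hsq : Real.sqrt 2 ^ 2 = 2 := Real.sq_sqrt (by norm_num)
  have hc3 : c ^ 2 + 8 * c - 16 < 0 := by nlinarith [Real.sqrt_nonneg 2]
  have hc4 : c < 2 := by nlinarith [Real.sqrt_nonneg 2]
  rw [h4]
  have heq : (4 : ℝ) + ((2:ℝ)^(c/x))^2 * b ^ 2 * (c - 2) ^ 2 +
      (2:ℝ)^(c/x) * b * (c ^ 2 + 4 * c - 8)
      = 4 + t ^ 2 * (c - 2) ^ 2 + t * (c ^ 2 + 4 * c - 8) := by ring
  rw [heq]
  have h6 : 0 ≤ t ^ 2 * c ^ 2 * (16 - 8 * c - c ^ 2) := by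
    have : 0 ≤ 16 - 8 * c - c ^ 2 := by linarith
    positivity
  nlinarith [sq_nonneg (2 * t * (c - 2) ^ 2 + (c ^ 2 + 4 * c - 8)), sq_nonneg (c - 2)]
end

section
/- Consider the optimization: minimize E = Σᵢ Fᵢ(Pᵢ)·tᵢ over transmit powers P₁,…,P₄ ≥ 0 and durations t₁, t₂ ≥ 0 with t₁ + t₂ ≤ T, subject to rate constraints of the form (tₖ/T)·W·log₂(1 + Pᵢ·gᵢ/(Pⱼ·qⱼ + σ²)) ≥ Rₖ, where each Fᵢ is strictly increasing, gᵢ, σ² > 0 and qⱼ ≥ 0. Then at any optimal solution all four rate constraints hold with equality. -/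
/-- Feasibility for the FD-TWR-2TS energy minimization: nonnegative powers and
durations, total duration at most `T`, and the four rate constraints. -/
def Feasible12 (T W σ2 : ℝ) (g q Rreq : Fin 4 → ℝ) (slot : Fin 4 → Fin 2)
    (pw intf : Fin 4 → Fin 4) (P : Fin 4 → ℝ) (t : Fin 2 → ℝ) : Prop :=
  (∀ i, 0 ≤ P i) ∧ (∀ k, 0 ≤ t k) ∧ t 0 + t 1 ≤ T ∧
  ∀ ℓ : Fin 4,
    (t (slot ℓ) / T) * W *
        Real.logb 2 (1 + P (pw ℓ) * g ℓ / (P (intf ℓ) * q ℓ + σ2)) ≥ Rreq ℓ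

/-- The total energy `Σᵢ Fᵢ(Pᵢ)·tᵢ`, where power `pw ℓ` is used during
timeslot `slot ℓ` (each power is transmitted in exactly one constraint). -/
def Energy12 (F : Fin 4 → ℝ → ℝ) (slot : Fin 4 → Fin 2) (pw : Fin 4 → Fin 4)
    (P : Fin 4 → ℝ) (t : Fin 2 → ℝ) : ℝ :=
  ∑ ℓ : Fin 4, F (pw ℓ) (P (pw ℓ)) * t (slot ℓ)

/-!
If the rate constraint `ℓ` were slack at an optimum, the power `P (pw ℓ)` transmitted in it
could be lowered a little (by continuity of the rate) while keeping constraint `ℓ` satisfied.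
Lowering a power never hurts any other constraint: there it can only appear as interference,
which only raises the SINR. Since each `F i` is strictly increasing and the timeslot of a slack
constraint has positive length, the energy strictly drops, contradicting optimality.
-/

open Set Topology

theorem pos_and_pos_of_le_mul_logb_one_add {R a s : ℝ} (hR : 0 < R) (hs : 0 ≤ s)
    (h : R ≤ a * Real.logb 2 (1 + s)) : 0 < a ∧ 0 < s := by
  have hprod : 0 < a * Real.logb 2 (1 + s) := hR.trans_le h
  have ha : 0 < a := pos_of_mul_pos_left hprod (Real.logb_nonneg one_lt_two (by linarith))
  have hlog : 0 < Real.logb 2 (1 + s) := pos_of_mul_pos_right hprod ha.le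
  exact ⟨ha, by linarith [(Real.logb_pos_iff one_lt_two (by linarith)).1 hlog]⟩

theorem mul_logb_one_add_div_le_of_le {a x I J : ℝ} (ha : 0 ≤ a) (hx : 0 ≤ x) (hJ : 0 < J)
    (hJI : J ≤ I) : a * Real.logb 2 (1 + x / I) ≤ a * Real.logb 2 (1 + x / J) := by
  have hxI : 0 ≤ x / I := div_nonneg hx (hJ.trans_le hJI).le
  exact mul_le_mul_of_nonneg_left
    (Real.logb_le_logb_of_le one_lt_two (by linarith) (by gcongr)) ha

theorem ContinuousAt.exists_mem_Ioo_lt {f : ℝ → ℝ} {a p R : ℝ} (hf : ContinuousAt f p)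
    (hap : a < p) (h : R < f p) : ∃ x ∈ Ioo a p, R < f x := by
  obtain ⟨x, hfx, hx⟩ :=
    ((hf.eventually (lt_mem_nhds h)).filter_mono nhdsWithin_le_nhds |>.and
      (Ioo_mem_nhdsLT hap)).exists (f := 𝓝[<] p)
  exact ⟨x, hx, hfx⟩

section Constraints

variable (T W σ2 : ℝ) (g q : Fin 4 → ℝ) (slot : Fin 4 → Fin 2) (pw intf : Fin 4 → Fin 4)

noncomputable def linkRate (P : Fin 4 → ℝ) (t : Fin 2 → ℝ) (ℓ : Fin 4) : ℝ :=
  t (slot ℓ) / T * W * Real.logb 2 (1 + P (pw ℓ) * g ℓ / (P (intf ℓ) * q ℓ + σ2))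

theorem feasible12_iff (Rreq : Fin 4 → ℝ) (P : Fin 4 → ℝ) (t : Fin 2 → ℝ) :
    Feasible12 T W σ2 g q Rreq slot pw intf P t ↔
      0 ≤ P ∧ (∀ k, 0 ≤ t k) ∧ t 0 + t 1 ≤ T ∧
        ∀ ℓ, Rreq ℓ ≤ linkRate T W σ2 g q slot pw intf P t ℓ :=
  Iff.rfl

variable {T W σ2 g q slot pw intf}

theorem pos_of_le_linkRate {R : ℝ} {P : Fin 4 → ℝ} {t : Fin 2 → ℝ} {ℓ : Fin 4}
    (hσ2 : 0 < σ2) (hg : 0 ≤ g) (hq : 0 ≤ q) (hP : 0 ≤ P) (hR : 0 < R)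
    (h : R ≤ linkRate T W σ2 g q slot pw intf P t ℓ) :
    0 < t (slot ℓ) / T * W ∧ 0 < P (pw ℓ) := by
  have hI : 0 < P (intf ℓ) * q ℓ + σ2 := add_pos_of_nonneg_of_pos (mul_nonneg (hP _) (hq _)) hσ2
  obtain ⟨ha, hs⟩ := pos_and_pos_of_le_mul_logb_one_add hR
    (div_nonneg (mul_nonneg (hP (pw ℓ)) (hg ℓ)) hI.le) h
  refine ⟨ha, (hP (pw ℓ)).lt_of_ne fun h0 => ?_⟩
  simp [← h0] at hs

theorem mul_logb_le_linkRate_of_le {P P' : Fin 4 → ℝ} {t : Fin 2 → ℝ} {ℓ : Fin 4}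
    (hσ2 : 0 < σ2) (hg : 0 ≤ g) (hq : 0 ≤ q) (ha : 0 ≤ t (slot ℓ) / T * W) (hP' : 0 ≤ P')
    (hle : P' ≤ P) :
    t (slot ℓ) / T * W * Real.logb 2 (1 + P' (pw ℓ) * g ℓ / (P (intf ℓ) * q ℓ + σ2)) ≤
      linkRate T W σ2 g q slot pw intf P' t ℓ :=
  mul_logb_one_add_div_le_of_le ha (mul_nonneg (hP' _) (hg ℓ))
    (add_pos_of_nonneg_of_pos (mul_nonneg (hP' _) (hq _)) hσ2)
    (add_le_add_left (mul_le_mul_of_nonneg_right (hle _) (hq _)) σ2)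

theorem le_linkRate_of_le {R : ℝ} {P P' : Fin 4 → ℝ} {t : Fin 2 → ℝ} {ℓ : Fin 4}
    (hσ2 : 0 < σ2) (hg : 0 ≤ g) (hq : 0 ≤ q) (hR : 0 < R) (hP' : 0 ≤ P') (hle : P' ≤ P)
    (hpw : P' (pw ℓ) = P (pw ℓ)) (h : R ≤ linkRate T W σ2 g q slot pw intf P t ℓ) :
    R ≤ linkRate T W σ2 g q slot pw intf P' t ℓ := by
  have ha := (pos_of_le_linkRate hσ2 hg hq (hP'.trans hle) hR h).1
  refine h.trans (le_of_eq_of_le ?_ (mul_logb_le_linkRate_of_le hσ2 hg hq ha.le hP' hle))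
  rw [hpw, linkRate]

theorem exists_lt_linkRate_update {R : ℝ} {P : Fin 4 → ℝ} {t : Fin 2 → ℝ} {ℓ : Fin 4}
    (hσ2 : 0 < σ2) (hg : 0 ≤ g) (hq : 0 ≤ q) (hP : 0 ≤ P) (hR : 0 < R)
    (h : R < linkRate T W σ2 g q slot pw intf P t ℓ) :
    ∃ p ∈ Ioo 0 (P (pw ℓ)),
      R < linkRate T W σ2 g q slot pw intf (Function.update P (pw ℓ) p) t ℓ := by
  obtain ⟨ha, hpos⟩ := pos_of_le_linkRate hσ2 hg hq hP hR h.le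
  set I := P (intf ℓ) * q ℓ + σ2
  have hI : 0 < I := add_pos_of_nonneg_of_pos (mul_nonneg (hP _) (hq _)) hσ2
  have hcont : ContinuousAt
      (fun x => t (slot ℓ) / T * W * Real.logb 2 (1 + x * g ℓ / I)) (P (pw ℓ)) := by
    refine continuousAt_const.mul (ContinuousAt.logb (by fun_prop) ?_)
    have := div_nonneg (mul_nonneg (hP (pw ℓ)) (hg ℓ)) hI.le
    positivity
  obtain ⟨p, hp, hRp⟩ := hcont.exists_mem_Ioo_lt hpos h
  refine ⟨p, hp, hRp.trans_le ?_⟩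
  simpa using mul_logb_le_linkRate_of_le (pw := pw) (intf := intf) hσ2 hg hq ha.le
    (le_update_iff.2 ⟨hp.1.le, fun j _ => hP j⟩) (update_le_iff.2 ⟨hp.2.le, fun _ _ => le_rfl⟩)

theorem feasible12_update {Rreq : Fin 4 → ℝ} {P : Fin 4 → ℝ} {t : Fin 2 → ℝ} {ℓ : Fin 4} {p : ℝ}
    (hσ2 : 0 < σ2) (hg : 0 ≤ g) (hq : 0 ≤ q) (hR : ∀ ℓ, 0 < Rreq ℓ)
    (hpw : Function.Injective pw) (hfeas : Feasible12 T W σ2 g q Rreq slot pw intf P t)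
    (hp : p ∈ Ioo 0 (P (pw ℓ)))
    (hℓ : Rreq ℓ ≤ linkRate T W σ2 g q slot pw intf (Function.update P (pw ℓ) p) t ℓ) :
    Feasible12 T W σ2 g q Rreq slot pw intf (Function.update P (pw ℓ) p) t := by
  obtain ⟨hP, ht, hsum, hcon⟩ := (feasible12_iff ..).1 hfeas
  have hP' : 0 ≤ Function.update P (pw ℓ) p := le_update_iff.2 ⟨hp.1.le, fun j _ => hP j⟩
  have hle : Function.update P (pw ℓ) p ≤ P := update_le_iff.2 ⟨hp.2.le, fun _ _ => le_rfl⟩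
  refine (feasible12_iff ..).2 ⟨hP', ht, hsum, fun ℓ' => ?_⟩
  rcases eq_or_ne ℓ' ℓ with rfl | hne
  · exact hℓ
  · exact le_linkRate_of_le hσ2 hg hq (hR ℓ') hP' hle
      (Function.update_of_ne (hpw.ne hne) _ _) (hcon ℓ')

end Constraints

theorem energy12_lt_of_le {F : Fin 4 → ℝ → ℝ} {slot : Fin 4 → Fin 2} {pw : Fin 4 → Fin 4}
    {P P' : Fin 4 → ℝ} {t : Fin 2 → ℝ} {ℓ : Fin 4} (hF : ∀ i, StrictMono (F i))
    (ht : ∀ k, 0 ≤ t k) (hle : P' ≤ P) (hlt : P' (pw ℓ) < P (pw ℓ)) (htℓ : 0 < t (slot ℓ)) :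
    Energy12 F slot pw P' t < Energy12 F slot pw P t :=
  Finset.sum_lt_sum (fun _ _ => mul_le_mul_of_nonneg_right ((hF _).monotone (hle _)) (ht _))
    ⟨ℓ, Finset.mem_univ _, mul_lt_mul_of_pos_right (hF _ hlt) htℓ⟩

theorem stmt_12_general (T W σ2 : ℝ) (hσ2 : 0 < σ2)
    (g q Rreq : Fin 4 → ℝ) (hg : ∀ ℓ, 0 < g ℓ) (hq : ∀ ℓ, 0 ≤ q ℓ)
    (hR : ∀ ℓ, 0 < Rreq ℓ)
    (F : Fin 4 → ℝ → ℝ) (hF : ∀ i, StrictMono (F i))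
    (slot : Fin 4 → Fin 2) (pw intf : Fin 4 → Fin 4) (hpw : Function.Bijective pw)
    (P : Fin 4 → ℝ) (t : Fin 2 → ℝ)
    (hfeas : Feasible12 T W σ2 g q Rreq slot pw intf P t)
    (hopt : ∀ P' t', Feasible12 T W σ2 g q Rreq slot pw intf P' t' →
      Energy12 F slot pw P t ≤ Energy12 F slot pw P' t') :
    ∀ ℓ : Fin 4,
      (t (slot ℓ) / T) * W *
          Real.logb 2 (1 + P (pw ℓ) * g ℓ / (P (intf ℓ) * q ℓ + σ2)) = Rreq ℓ := by
  have hg' : 0 ≤ g := fun ℓ => (hg ℓ).le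
  obtain ⟨hP, ht, -, hcon⟩ := (feasible12_iff ..).1 hfeas
  intro ℓ
  refine le_antisymm (not_lt.1 fun hslack => ?_) (hcon ℓ)
  obtain ⟨p, hp, hℓ⟩ := exists_lt_linkRate_update hσ2 hg' hq hP (hR ℓ) hslack
  have hfeas' := feasible12_update hσ2 hg' hq hR hpw.injective hfeas hp hℓ.le
  have htℓ : t (slot ℓ) ≠ 0 := fun h0 => by
    simpa [h0] using (pos_of_le_linkRate hσ2 hg' hq hP (hR ℓ) (hcon ℓ)).1
  exact (hopt _ _ hfeas').not_gt <| energy12_lt_of_le hF ht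
    (update_le_iff.2 ⟨hp.2.le, fun _ _ => le_rfl⟩) (by simpa using hp.2) ((ht _).lt_of_ne' htℓ)

theorem stmt_12 (T W σ2 : ℝ) (hT : 0 < T) (hW : 0 < W) (hσ2 : 0 < σ2)
    (g q Rreq : Fin 4 → ℝ) (hg : ∀ ℓ, 0 < g ℓ) (hq : ∀ ℓ, 0 ≤ q ℓ)
    (hR : ∀ ℓ, 0 < Rreq ℓ)
    (F : Fin 4 → ℝ → ℝ) (hF : ∀ i, StrictMono (F i))
    (slot : Fin 4 → Fin 2) (pw intf : Fin 4 → Fin 4) (hpw : Function.Bijective pw)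
    (P : Fin 4 → ℝ) (t : Fin 2 → ℝ)
    (hfeas : Feasible12 T W σ2 g q Rreq slot pw intf P t)
    (hopt : ∀ P' t', Feasible12 T W σ2 g q Rreq slot pw intf P' t' →
      Energy12 F slot pw P t ≤ Energy12 F slot pw P' t') :
    ∀ ℓ : Fin 4,
      (t (slot ℓ) / T) * W *
          Real.logb 2 (1 + P (pw ℓ) * g ℓ / (P (intf ℓ) * q ℓ + σ2)) = Rreq ℓ :=
  stmt_12_general T W σ2 hσ2 g q Rreq hg hq hR F hF slot pw intf hpw P t hfeas hopt
end
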